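/- arXiv:2509.17820 — 4 statements merged into one kernel-verified Lean document; each statement's English description precedes it below -/
import Mathlib

section
/- For every n-element poset P whose maximum antichain has size at most a ≥ 1, there exists a family S ⊆ 2^[n] of size at most p(n) · a · (n/a + 1)^a (where p(n) is the number of integer partitions of n), depending only on n and a, such that P embeds as an induced subposet of (S, ⊆). More precisely, there exists a single family S of this size such that every n-element poset with no antichain of size a+1 embeds into (S, ⊆). -/
/-!
By Dilworth's theorem `P` is a disjoint union of `a` chains. Ordering them by size, their sizes
`c₁ ≤ ⋯ ≤ c_a` are a partition of `n` padded with zeros; cut `[n]` into consecutive blocks of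
these lengths and send `x` to the union over `i` of the initial segment of the `i`-th block of
length `#{z ∈ C_i | z ≤ x}`. This is an order embedding, since `x` is recovered inside its own
chain. The image depends only on the partition and on a vector `d ≤ c`, which gives at most
`p(n) ∏ (c_i + 1) ≤ p(n) (n/a + 1)^a` sets, by AM–GM.

Dilworth's theorem is proved by Galvin's induction: remove a maximal element `m` and split the
rest into `a` chains; in each chain let `t_i` be the largest element lying in an antichain of
size `a`. The `t_i` form an antichain, so `t_i ≤ m` for some `i`, and removing the chain
`{m} ∪ {y ∈ C_i | y ≤ t_i}` leaves no antichain of size `a`.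
-/

open Finset

section Dilworth

variable {α : Type*} [PartialOrder α]

def IsChainColoring (s : Finset α) (a : ℕ) (g : α → ℕ) : Prop :=
  (∀ x ∈ s, g x < a) ∧ ∀ x ∈ s, ∀ y ∈ s, g x = g y → x ≤ y ∨ y ≤ x

namespace IsChainColoring

variable {s A K : Finset α} {a i : ℕ} {g : α → ℕ}

lemma eq_of_isAntichain (hg : IsChainColoring s a g) (hA : A ⊆ s)
    (hAnti : IsAntichain (· ≤ ·) (A : Set α)) {x y : α} (hx : x ∈ A) (hy : y ∈ A)
    (h : g x = g y) : x = y := by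
  by_contra hne
  rcases hg.2 x (hA hx) y (hA hy) h with hxy | hyx
  exacts [hAnti hx hy hne hxy, hAnti hy hx (Ne.symm hne) hyx]

lemma exists_mem_of_isAntichain (hg : IsChainColoring s a g) (hA : A ⊆ s)
    (hAnti : IsAntichain (· ≤ ·) (A : Set α)) (hcard : #A = a) (hi : i < a) :
    ∃ x ∈ A, g x = i := by
  obtain ⟨x, hx, rfl⟩ := surjOn_of_injOn_of_card_le g
    (fun x hx => mem_coe.2 (mem_range.2 (hg.1 x (hA hx))))
    (fun x hx y hy => hg.eq_of_isAntichain hA hAnti hx hy) (by simp [hcard])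
    (mem_coe.2 (mem_range.2 hi))
  exact ⟨x, hx, rfl⟩

lemma ite_of_sdiff [DecidableEq α] (hg : IsChainColoring (s \ K) a g)
    (hK : IsChain (· ≤ ·) (K : Set α)) :
    IsChainColoring s (a + 1) (fun x => if x ∈ K then a else g x) := by
  have hsK {x} (hx : x ∈ s) (hxK : x ∉ K) : x ∈ s \ K := mem_sdiff.2 ⟨hx, hxK⟩
  refine ⟨fun x hx => ?_, fun x hx y hy hxy => ?_⟩
  · dsimp only
    split_ifs with hxK
    exacts [a.lt_succ_self, (hg.1 x (hsK hx hxK)).trans a.lt_succ_self]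
  · by_cases hxK : x ∈ K <;> by_cases hyK : y ∈ K <;> simp only [hxK, hyK, if_true, if_false] at hxy
    · exact hK.total hxK hyK
    · exact absurd hxy.symm (hg.1 y (hsK hy hyK)).ne
    · exact absurd hxy (hg.1 x (hsK hx hxK)).ne
    · exact hg.2 x (hsK hx hxK) y (hsK hy hyK) hxy

end IsChainColoring

def MemLargeAntichain (s : Finset α) (a : ℕ) (x : α) : Prop :=
  ∃ A ⊆ s, IsAntichain (· ≤ ·) (A : Set α) ∧ #A = a ∧ x ∈ A

section Galvin

variable {s : Finset α} {a i : ℕ} {g : α → ℕ}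

lemma IsChainColoring.exists_greatest_memLargeAntichain (hg : IsChainColoring s a g)
    (hlarge : ∃ A ⊆ s, IsAntichain (· ≤ ·) (A : Set α) ∧ #A = a) (hi : i < a) :
    ∃ t ∈ s, g t = i ∧ MemLargeAntichain s a t ∧
      ∀ y ∈ s, g y = i → MemLargeAntichain s a y → y ≤ t := by
  classical
  obtain ⟨A, hAs, hAnti, hA⟩ := hlarge
  obtain ⟨x, hxA, hxi⟩ := hg.exists_mem_of_isAntichain hAs hAnti hA hi
  obtain ⟨t, htT, htmax⟩ := exists_maximal (s := {y ∈ s | g y = i ∧ MemLargeAntichain s a y})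
    ⟨x, mem_filter.2 ⟨hAs hxA, hxi, A, hAs, hAnti, hA, hxA⟩⟩
  obtain ⟨ht, hti, htl⟩ := mem_filter.1 htT
  refine ⟨t, ht, hti, htl, fun y hy hyi hyl => ?_⟩
  rcases hg.2 y hy t ht (hyi.trans hti.symm) with hyt | hty
  exacts [hyt, htmax (mem_filter.2 ⟨hy, hyi, hyl⟩) hty]

lemma IsChainColoring.not_le_of_memLargeAntichain (hg : IsChainColoring s a g) {t t' : α}
    (ht : ∀ y ∈ s, g y = i → MemLargeAntichain s a y → y ≤ t) (hi : i < a)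
    (ht' : MemLargeAntichain s a t') (hgt' : g t' ≠ i) : ¬t ≤ t' := by
  intro htt'
  obtain ⟨B, hBs, hBanti, hB, ht'B⟩ := ht'
  obtain ⟨r, hrB, hri⟩ := hg.exists_mem_of_isAntichain hBs hBanti hB hi
  have hrt : r ≤ t := ht r (hBs hrB) hri ⟨B, hBs, hBanti, hB, hrB⟩
  exact hBanti hrB ht'B (by rintro rfl; exact hgt' hri) (hrt.trans htt')

lemma exists_chain_forall_antichain_card_lt [DecidableEq α] {m : α} (hm : Maximal (· ∈ s) m)
    (hs : ∀ A ⊆ s, IsAntichain (· ≤ ·) (A : Set α) → #A ≤ a)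
    (hg : IsChainColoring (s.erase m) a g) :
    ∃ K : Finset α, m ∈ K ∧ IsChain (· ≤ ·) (K : Set α) ∧
      ∀ A ⊆ s \ K, IsAntichain (· ≤ ·) (A : Set α) → #A < a := by
  classical
  by_cases hlarge : ∃ A ⊆ s.erase m, IsAntichain (· ≤ ·) (A : Set α) ∧ #A = a
  swap
  · refine ⟨{m}, mem_singleton_self m, by simp, fun A hA hAnti => ?_⟩
    rw [sdiff_singleton_eq_erase] at hA
    exact (hs A (hA.trans (erase_subset m s)) hAnti).lt_of_ne fun h => hlarge ⟨A, hA, hAnti, h⟩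
  choose t hts htg htl httop using
    fun i : Fin a => hg.exists_greatest_memLargeAntichain hlarge i.2
  have htm (i : Fin a) : t i ≠ m := ne_of_mem_erase (hts i)
  -- otherwise `m` together with the `t i` would form an antichain of size `a + 1`
  obtain ⟨i, hti⟩ : ∃ i, t i ≤ m := by
    by_contra! h
    have ht_inj : Function.Injective t := fun i j hij => Fin.ext (by rw [← htg i, hij, htg j])
    have hanti : IsAntichain (· ≤ ·) (↑(insert m (univ.image t)) : Set α) := by
      rw [coe_insert, coe_image, coe_univ, Set.image_univ]
      refine IsAntichain.insert ?_ ?_ ?_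
      · rintro _ ⟨i, rfl⟩ _ ⟨j, rfl⟩ hij
        exact hg.not_le_of_memLargeAntichain (httop i) i.2 (htl j)
          (by rw [htg]; exact fun h => hij (congrArg t (Fin.ext h.symm)))
      · rintro _ ⟨i, rfl⟩ -
        exact h i
      · rintro _ ⟨i, rfl⟩ - hmt
        exact h i (hm.2 (mem_of_mem_erase (hts i)) hmt)
    have := hs _ (insert_subset hm.1 fun x hx => by
      obtain ⟨i, -, rfl⟩ := mem_image.1 hx; exact mem_of_mem_erase (hts i)) hanti
    rw [card_insert_of_notMem (by simpa [eq_comm] using htm), card_image_of_injective _ ht_inj,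
      card_univ, Fintype.card_fin] at this
    omega
  refine ⟨insert m {y ∈ s.erase m | g y = i ∧ y ≤ t i}, mem_insert_self _ _, ?_, ?_⟩
  · rw [coe_insert]
    refine IsChain.insert (fun x hx y hy _ => ?_) fun y hy _ => Or.inr ?_
    · simp only [mem_coe, mem_filter] at hx hy
      exact hg.2 x hx.1 y hy.1 (hx.2.1.trans hy.2.1.symm)
    · simp only [mem_coe, mem_filter] at hy
      exact hy.2.2.trans hti
  · intro A hA hAnti
    have hAs : A ⊆ s.erase m := fun x hx => by
      obtain ⟨hxs, hxK⟩ := mem_sdiff.1 (hA hx)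
      exact mem_erase.2 ⟨fun h => hxK (h ▸ mem_insert_self _ _), hxs⟩
    refine (hs A (hAs.trans (erase_subset m s)) hAnti).lt_of_ne fun hcard => ?_
    obtain ⟨r, hrA, hri⟩ := hg.exists_mem_of_isAntichain hAs hAnti hcard i.2
    have hrt : r ≤ t i := httop i r (hAs hrA) hri ⟨A, hAs, hAnti, hcard, hrA⟩
    exact (mem_sdiff.1 (hA hrA)).2 (mem_insert_of_mem (mem_filter.2 ⟨hAs hrA, hri, hrt⟩))

end Galvin

theorem exists_isChainColoring (s : Finset α) (a : ℕ)
    (hs : ∀ A ⊆ s, IsAntichain (· ≤ ·) (A : Set α) → #A ≤ a) :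
    ∃ g, IsChainColoring s a g := by
  classical
  induction s using Finset.strongInduction generalizing a with
  | H s ih =>
  obtain rfl | hne := s.eq_empty_or_nonempty
  · exact ⟨0, by simp [IsChainColoring]⟩
  obtain ⟨m, hm⟩ := s.exists_maximal hne
  have ha : 1 ≤ a := by simpa using hs {m} (singleton_subset_iff.2 hm.1) (by simp)
  obtain ⟨g, hg⟩ := ih _ (erase_ssubset hm.1) a fun A hA => hs A (hA.trans (erase_subset m s))
  obtain ⟨K, hmK, hK, hsK⟩ := exists_chain_forall_antichain_card_lt hm hs hg
  have hsK_ssubset : s \ K ⊂ s :=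
    (ssubset_iff_of_subset sdiff_subset).2 ⟨m, hm.1, fun h => (mem_sdiff.1 h).2 hmK⟩
  obtain ⟨h, hh⟩ := ih _ hsK_ssubset (a - 1) fun A hA hAnti =>
    Nat.le_sub_one_of_lt (hsK A hA hAnti)
  exact ⟨_, Nat.sub_add_cancel ha ▸ hh.ite_of_sdiff hK⟩

end Dilworth

section Blocks

variable {a : ℕ}

-- The `i`-th block of `range (∑ i, c i)` has length `c i`; `block c d` takes the initial segment
-- of length `d i` of each.
def block (c d : Fin a → ℕ) : Finset ℕ :=
  ({p : (i : Fin a) × Fin (c i) | (p.2 : ℕ) < d p.1} : Finset _).map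
    (finSigmaFinEquiv.toEmbedding.trans Fin.valEmbedding)

lemma block_subset_range (c d : Fin a → ℕ) : block c d ⊆ range (∑ i, c i) := by
  intro x hx
  obtain ⟨p, -, rfl⟩ := mem_map.1 hx
  exact mem_range.2 (finSigmaFinEquiv p).2

lemma block_subset_block_iff {c d d' : Fin a → ℕ} (hd : d ≤ c) :
    block c d ⊆ block c d' ↔ d ≤ d' := by
  rw [block, block, map_subset_map]
  refine ⟨fun h i => ?_, fun h p hp => ?_⟩
  · by_contra! hlt
    have := h (mem_filter.2 ⟨mem_univ ⟨i, d' i, hlt.trans_le (hd i)⟩, hlt⟩)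
    simp at this
  · simp only [mem_filter, mem_univ, true_and] at hp ⊢
    exact hp.trans_le (h p.1)

def blockFamily (c : Fin a → ℕ) : Finset (Finset ℕ) :=
  (Fintype.piFinset fun i => range (c i + 1)).image (block c)

lemma card_blockFamily_le (c : Fin a → ℕ) : #(blockFamily c) ≤ ∏ i, (c i + 1) :=
  card_image_le.trans (by simp)

end Blocks

-- Partitions of `n` into at most `a` parts, padded with zeros.
def sortedCompositions (n a : ℕ) : Finset (Fin a → ℕ) :=
  {c ∈ Fintype.piFinset fun _ => range (n + 1) | Monotone c ∧ ∑ i, c i = n}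

lemma Multiset.eq_of_card_eq_of_filter_ne_zero_eq {s t : Multiset ℕ} (hst : card s = card t)
    (h : s.filter (· ≠ 0) = t.filter (· ≠ 0)) : s = t := by
  have hzero (u : Multiset ℕ) :
      u.filter (¬· ≠ 0) = replicate (card u - card (u.filter (· ≠ 0))) 0 := by
    refine eq_replicate.2 ⟨?_, fun b hb => by simpa using of_mem_filter hb⟩
    have := congrArg card (filter_add_not (· ≠ 0) u)
    rw [card_add] at this
    omega
  calc s = s.filter (· ≠ 0) + s.filter (¬· ≠ 0) := (filter_add_not _ s).symm
    _ = t.filter (· ≠ 0) + t.filter (¬· ≠ 0) := by rw [hzero s, hzero t, h, hst]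
    _ = t := filter_add_not _ t

lemma Monotone.eq_of_map_univ_eq {a : ℕ} {c c' : Fin a → ℕ} (hc : Monotone c) (hc' : Monotone c')
    (h : univ.val.map c = univ.val.map c') : c = c' := by
  rw [Fin.univ_val_map, Fin.univ_val_map, Multiset.coe_eq_coe] at h
  exact List.ofFn_injective (h.eq_of_sortedLE hc.sortedLE_ofFn hc'.sortedLE_ofFn)

lemma card_sortedCompositions_le (n a : ℕ) :
    #(sortedCompositions n a) ≤ Fintype.card n.Partition := by
  have hsum {c} (hc : c ∈ sortedCompositions n a) : (univ.val.map c).sum = n :=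
    (mem_filter.1 hc).2.2
  have hmono {c} (hc : c ∈ sortedCompositions n a) : Monotone c := (mem_filter.1 hc).2.1
  rw [← Fintype.card_coe]
  refine Fintype.card_le_of_injective
    (fun c => Nat.Partition.ofSums n (univ.val.map c.1) (hsum c.2)) fun c c' h => ?_
  refine Subtype.ext (Monotone.eq_of_map_univ_eq (hmono c.2) (hmono c'.2) ?_)
  exact Multiset.eq_of_card_eq_of_filter_ne_zero_eq (by simp) (congrArg Nat.Partition.parts h)

lemma Real.prod_le_mean_pow_card {ι : Type*} (s : Finset ι) (f : ι → ℝ) (hf : ∀ i ∈ s, 0 ≤ f i) :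
    ∏ i ∈ s, f i ≤ ((∑ i ∈ s, f i) / #s) ^ #s := by
  obtain rfl | hs := s.eq_empty_or_nonempty
  · simp
  have hs' : (#s : ℝ) ≠ 0 := by positivity
  have := Real.geom_mean_le_arith_mean_weighted s (fun _ => (#s : ℝ)⁻¹) f (fun _ _ => by positivity)
    (by simp [hs']) hf
  calc ∏ i ∈ s, f i = (∏ i ∈ s, f i ^ (#s : ℝ)⁻¹) ^ #s := by
        rw [← prod_pow]
        exact prod_congr rfl fun i hi => (Real.rpow_inv_natCast_pow (hf i hi) hs.card_ne_zero).symm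
    _ ≤ (∑ i ∈ s, (#s : ℝ)⁻¹ * f i) ^ #s :=
        pow_le_pow_left₀ (prod_nonneg fun i hi => Real.rpow_nonneg (hf i hi) _) this _
    _ = ((∑ i ∈ s, f i) / #s) ^ #s := by rw [← mul_sum, inv_mul_eq_div]

lemma prod_add_one_le {a n : ℕ} {c : Fin a → ℕ} (hc : ∑ i, c i = n) :
    ∏ i, ((c i : ℝ) + 1) ≤ ((n : ℝ) / a + 1) ^ a := by
  obtain rfl | ha := a.eq_zero_or_pos
  · simp
  have ha' : (a : ℝ) ≠ 0 := by positivity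
  calc ∏ i, ((c i : ℝ) + 1) ≤ ((∑ i, ((c i : ℝ) + 1)) / #univ) ^ #(univ : Finset (Fin a)) :=
        Real.prod_le_mean_pow_card _ _ fun i _ => by positivity
    _ = ((n : ℝ) / a + 1) ^ a := by
        rw [sum_add_distrib, ← Nat.cast_sum, hc, sum_const, card_univ, Fintype.card_fin,
          nsmul_one, add_div, div_self ha']

def universalFamily (n a : ℕ) : Finset (Finset ℕ) :=
  (sortedCompositions n a).biUnion blockFamily

lemma subset_range_of_mem_universalFamily {n a : ℕ} {S : Finset ℕ}
    (hS : S ∈ universalFamily n a) : S ⊆ range n := by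
  obtain ⟨c, hc, hS⟩ := mem_biUnion.1 hS
  obtain ⟨d, -, rfl⟩ := mem_image.1 hS
  exact (mem_filter.1 hc).2.2 ▸ block_subset_range c d

lemma card_universalFamily_le (n a : ℕ) :
    (#(universalFamily n a) : ℝ) ≤ Fintype.card n.Partition * ((n : ℝ) / a + 1) ^ a := by
  calc (#(universalFamily n a) : ℝ) ≤ ∑ c ∈ sortedCompositions n a, ((n : ℝ) / a + 1) ^ a := by
        refine (Nat.cast_le.2 card_biUnion_le).trans ?_
        push_cast
        refine sum_le_sum fun c hc => ?_
        refine (Nat.cast_le.2 (card_blockFamily_le c)).trans ?_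
        push_cast
        exact prod_add_one_le (mem_filter.1 hc).2.2
    _ ≤ _ := by
        rw [sum_const, nsmul_eq_mul]
        gcongr
        exact_mod_cast card_sortedCompositions_le n a

lemma IsChain.le_of_card_filter_le {α : Type*} [PartialOrder α] [DecidableLE α] {C : Finset α}
    (hC : IsChain (· ≤ ·) (C : Set α)) {x y : α} (hx : x ∈ C)
    (h : #{z ∈ C | z ≤ x} ≤ #{z ∈ C | z ≤ y}) : x ≤ y := by
  by_contra hxy
  refine (card_lt_card ((ssubset_iff_of_subset fun z hz => ?_).2 ⟨x, ?_, ?_⟩)).not_ge h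
  · simp only [mem_filter] at hz ⊢
    refine ⟨hz.1, (hC.total hz.1 hx).resolve_right fun hxz => hxy (hxz.trans hz.2)⟩
  · exact mem_filter.2 ⟨hx, le_rfl⟩
  · exact fun hx' => hxy (mem_filter.1 hx').2

theorem exists_mem_blockFamily_orderEmbedding {P : Type*} [Fintype P] [PartialOrder P] {a : ℕ}
    (g : P → Fin a) (hg : ∀ x y, g x = g y → x ≤ y ∨ y ≤ x) :
    ∃ c ∈ sortedCompositions (Fintype.card P) a, ∃ f : P → Finset ℕ,
      (∀ x, f x ∈ blockFamily c) ∧ ∀ x y, x ≤ y ↔ f x ⊆ f y := by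
  classical
  let k : Fin a → ℕ := fun i => #{x | g x = i}
  let σ := Tuple.sort k
  let C : Fin a → Finset P := fun i => {x | g x = σ i}
  have hC (i : Fin a) : IsChain (· ≤ ·) (C i : Set P) := fun x hx y hy _ => by
    simp only [C, mem_coe, mem_filter, mem_univ, true_and] at hx hy
    exact hg x y (hx.trans hy.symm)
  let d : P → Fin a → ℕ := fun x i => #{z ∈ C i | z ≤ x}
  have hd (x : P) : d x ≤ k ∘ σ := fun i => card_le_card (filter_subset _ _)
  refine ⟨k ∘ σ, ?_, fun x => block (k ∘ σ) (d x), fun x => ?_, fun x y => ?_⟩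
  · refine mem_filter.2 ⟨Fintype.mem_piFinset.2 fun i => ?_, Tuple.monotone_sort k, ?_⟩
    · exact mem_range.2 (Nat.lt_succ_of_le (card_le_univ _))
    · rw [Function.comp_def, Equiv.sum_comp σ k, ← card_univ,
        card_eq_sum_card_fiberwise fun x _ => mem_univ (g x)]
  · exact mem_image_of_mem _
      (Fintype.mem_piFinset.2 fun i => mem_range.2 (Nat.lt_succ_of_le (hd x i)))
  · rw [block_subset_block_iff (hd x)]
    refine ⟨fun hxy i => card_le_card fun z hz => ?_, fun h => ?_⟩
    · simp only [mem_filter] at hz ⊢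
      exact ⟨hz.1, hz.2.trans hxy⟩
    · exact (hC (σ.symm (g x))).le_of_card_filter_le (by simp [C]) (h (σ.symm (g x)))

/-- There is a single family `𝒮 ⊆ 2^[n]` of size at most `p(n) · a · (n/a + 1)^a`
into which every `n`-element poset with no antichain of size `a + 1` embeds. -/
theorem stmt_6 (n a : ℕ) (ha : 1 ≤ a) :
    ∃ 𝒮 : Finset (Finset ℕ),
      (∀ S ∈ 𝒮, S ⊆ Finset.range n) ∧
      (𝒮.card : ℝ) ≤ (Fintype.card (Nat.Partition n) : ℝ) * a * ((n : ℝ) / a + 1) ^ a ∧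
      ∀ (P : Type) [Fintype P] [PartialOrder P], Fintype.card P = n →
        (∀ A : Finset P, IsAntichain (· ≤ ·) (A : Set P) → A.card ≤ a) →
        ∃ f : P → Finset ℕ, (∀ x, f x ∈ 𝒮) ∧ ∀ x y : P, x ≤ y ↔ f x ⊆ f y := by
  refine ⟨universalFamily n a, fun S => subset_range_of_mem_universalFamily, ?_, ?_⟩
  · refine (card_universalFamily_le n a).trans ?_
    gcongr
    exact le_mul_of_one_le_right (Nat.cast_nonneg _) (Nat.one_le_cast.2 ha)
  · intro P _ _ hP hP_width
    obtain ⟨g, hg_lt, hg_chain⟩ := exists_isChainColoring univ a fun A _ => hP_width A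
    obtain ⟨c, hc, f, hf, hf_iff⟩ := exists_mem_blockFamily_orderEmbedding
      (fun x => (⟨g x, hg_lt x (mem_univ x)⟩ : Fin a))
      fun x y h => hg_chain x (mem_univ x) y (mem_univ y) (Fin.val_eq_of_eq h)
    exact ⟨f, fun x => mem_biUnion.2 ⟨c, hP ▸ hc, hf x⟩, hf_iff⟩
end

section
/- Let n ≥ a ≥ 2 and let ℓ be the smallest integer such that the central binomial coefficient C(ℓ, ⌊ℓ/2⌋) ≥ a. Then every n-element poset P containing an antichain of size a embeds as an induced subposet into the Boolean lattice (2^[n - a + ℓ], ⊆). -/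
/-- Every `n`-element poset containing an antichain of size `a` embeds into the Boolean
lattice on `n - a + ℓ` coordinates, where `ℓ` is least with `C(ℓ, ⌊ℓ/2⌋) ≥ a`. -/
theorem stmt_7 (n a l : ℕ) (h2 : 2 ≤ a) (han : a ≤ n)
    (hl : a ≤ l.choose (l / 2)) (hmin : ∀ m : ℕ, m < l → m.choose (m / 2) < a)
    (P : Type*) [Fintype P] [PartialOrder P] (hP : Fintype.card P = n)
    (A : Finset P) (hA : IsAntichain (· ≤ ·) (A : Set P)) (hAcard : A.card = a) :
    ∃ f : P → Finset (Fin (n - a + l)), ∀ x y : P, x ≤ y ↔ f x ⊆ f y := by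
  classical
  have hl2 : 2 ≤ l := by
    by_contra h
    push_neg at h
    interval_cases l <;> simp [Nat.choose] at hl <;> omega
  set k := l / 2 with hkdef
  have hk1 : 1 ≤ k := by omega
  have hkl : k < l := Nat.div_lt_self (by omega) (by omega)
  -- obtain an injection from A into k-subsets of Fin l
  have hcard1 : Fintype.card ↥A ≤
      Fintype.card ↥(Finset.univ.powersetCard k (α := Fin l)) := by
    have e1 : Fintype.card ↥A = a := by
      rw [Fintype.card_coe, hAcard]
    have e2 : Fintype.card ↥(Finset.univ.powersetCard k (α := Fin l))
        = l.choose k := by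
      rw [Fintype.card_coe, Finset.card_powersetCard, Finset.card_univ, Fintype.card_fin]
    rw [e1, e2]; exact hl
  obtain ⟨emb⟩ := Function.Embedding.nonempty_of_card_le hcard1
  set S : P → Finset (Fin l) := fun z =>
    if h : z ∈ A then ((emb ⟨z, h⟩ : ↥(Finset.univ.powersetCard k (α := Fin l))) :
      Finset (Fin l)) else ∅ with hSdef
  have hScard : ∀ z ∈ A, (S z).card = k := by
    intro z hz
    have := (emb ⟨z, hz⟩).2
    rw [Finset.mem_powersetCard] at this
    simp only [hSdef, dif_pos hz]
    exact this.2
  have hSinj : ∀ z ∈ A, ∀ w ∈ A, S z = S w → z = w := by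
    intro z hz w hw h
    simp only [hSdef, dif_pos hz, dif_pos hw] at h
    have := emb.injective (Subtype.ext h)
    exact congrArg Subtype.val this
  have hScomplne : ∀ z ∈ A, ((S z)ᶜ : Finset (Fin l)).Nonempty := by
    intro z hz
    rw [← Finset.card_pos, Finset.card_compl, Fintype.card_fin, hScard z hz]
    omega
  set τ : P → Fin l := fun z =>
    if h : ((S z)ᶜ : Finset (Fin l)).Nonempty then h.choose else ⟨0, by omega⟩ with hτdef
  have hτ : ∀ z ∈ A, τ z ∉ S z := by
    intro z hz
    have hne := hScomplne z hz
    simp only [hτdef, dif_pos hne]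
    have := hne.choose_spec
    rwa [Finset.mem_compl] at this
  -- the coordinate type
  set Pp : P → Prop := fun u => ∃ z ∈ A, z < u with hPpdef
  set Pred : ({u : P // u ∉ A} ⊕ Fin l) → P → Prop := fun c y =>
    match c with
    | .inl u => if Pp u.1 then ¬ (y ≤ u.1) else u.1 ≤ y
    | .inr i => ∃ z ∈ A, z ≤ y ∧ (i ∈ S z ∨ (z ≠ y ∧ i = τ z)) with hPreddef
  set f : P → Finset ({u : P // u ∉ A} ⊕ Fin l) := fun y =>
    Finset.univ.filter (fun c => Pred c y) with hfdef
  have hmem : ∀ c y, c ∈ f y ↔ Pred c y := by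
    intro c y; simp [hfdef]
  -- the main equivalence
  have hmain : ∀ x y : P, x ≤ y ↔ f x ⊆ f y := by
    intro x y
    constructor
    · intro hxy c hc
      rw [hmem] at *
      match c with
      | .inl u =>
        simp only [hPreddef] at hc ⊢
        by_cases hu : Pp u.1
        · rw [if_pos hu] at hc ⊢
          exact fun h => hc (hxy.trans h)
        · rw [if_neg hu] at hc ⊢
          exact hc.trans hxy
      | .inr i =>
        obtain ⟨z, hz, hzx, hd⟩ := hc
        refine ⟨z, hz, hzx.trans hxy, ?_⟩
        rcases hd with hd | ⟨hne, hi⟩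
        · exact Or.inl hd
        · refine Or.inr ⟨?_, hi⟩
          intro hzy
          subst hzy
          exact hne (le_antisymm hxy hzx).symm
    · intro h
      by_contra hxy
      have hP' : ∀ c, Pred c x → Pred c y := by
        intro c hc
        have := h ((hmem c x).2 hc)
        exact (hmem c y).1 this
      -- case analysis
      by_cases hxA : x ∈ A
      · by_cases hyA : y ∈ A
        · -- S x ⊆ S y forces x = y
          have hsub : S x ⊆ S y := by
            intro i hi
            have := hP' (.inr i) ⟨x, hxA, le_refl x, Or.inl hi⟩
            obtain ⟨z, hz, hzy, hd⟩ := this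
            have hzeq : z = y := by
              by_contra hne
              exact hA hz hyA hne hzy
            subst hzeq
            rcases hd with hd | ⟨hne, _⟩
            · exact hd
            · exact absurd rfl hne
          have heq : S x = S y :=
            Finset.eq_of_subset_of_card_le hsub
              (by rw [hScard x hxA, hScard y hyA])
          have := hSinj x hxA y hyA heq
          exact hxy (this ▸ le_refl x)
        · by_cases hyP : Pp y
          · have h1 : Pred (.inl ⟨y, hyA⟩) x := by
              simp only [hPreddef, if_pos hyP]; exact hxy
            have h2 := hP' (.inl ⟨y, hyA⟩) h1
            simp only [hPreddef, if_pos hyP] at h2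
            exact h2 (le_refl y)
          · obtain ⟨i, hi⟩ := Finset.card_pos.1 (by rw [hScard x hxA]; omega)
            have := hP' (.inr i) ⟨x, hxA, le_refl x, Or.inl hi⟩
            obtain ⟨z, hz, hzy, _⟩ := this
            have : z ≠ y := fun h => hyA (h ▸ hz)
            exact hyP ⟨z, hz, lt_of_le_of_ne hzy this⟩
      · by_cases hxP : Pp x
        · obtain ⟨z₀, hz₀A, hz₀x⟩ := hxP
          by_cases hyA : y ∈ A
          · -- cardinality contradiction
            have hsub : insert (τ z₀) (S z₀) ⊆ S y := by
              intro i hi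
              have hpx : Pred (.inr i) x := by
                rcases Finset.mem_insert.1 hi with hi | hi
                · exact ⟨z₀, hz₀A, hz₀x.le, Or.inr ⟨fun h => hxA (h ▸ hz₀A), hi⟩⟩
                · exact ⟨z₀, hz₀A, hz₀x.le, Or.inl hi⟩
              obtain ⟨z, hz, hzy, hd⟩ := hP' (.inr i) hpx
              have hzeq : z = y := by
                by_contra hne
                exact hA hz hyA hne hzy
              subst hzeq
              rcases hd with hd | ⟨hne, _⟩
              · exact hd
              · exact absurd rfl hne
            have hc1 : (insert (τ z₀) (S z₀)).card = k + 1 := by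
              rw [Finset.card_insert_of_notMem (hτ z₀ hz₀A), hScard z₀ hz₀A]
            have := Finset.card_le_card hsub
            rw [hc1, hScard y hyA] at this
            omega
          · by_cases hyP : Pp y
            · have h1 : Pred (.inl ⟨y, hyA⟩) x := by
                simp only [hPreddef, if_pos hyP]; exact hxy
              have h2 := hP' (.inl ⟨y, hyA⟩) h1
              simp only [hPreddef, if_pos hyP] at h2
              exact h2 (le_refl y)
            · obtain ⟨i, hi⟩ := Finset.card_pos.1 (by rw [hScard z₀ hz₀A]; omega)
              have := hP' (.inr i) ⟨z₀, hz₀A, hz₀x.le, Or.inl hi⟩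
              obtain ⟨z, hz, hzy, _⟩ := this
              have : z ≠ y := fun h => hyA (h ▸ hz)
              exact hyP ⟨z, hz, lt_of_le_of_ne hzy this⟩
        · have h1 : Pred (.inl ⟨x, hxA⟩) x := by
            simp only [hPreddef, if_neg hxP]
            exact le_refl x
          have h2 := hP' (.inl ⟨x, hxA⟩) h1
          simp only [hPreddef, if_neg hxP] at h2
          exact hxy h2
  -- transport along a cardinality equivalence
  have hcardC : Fintype.card ({u : P // u ∉ A} ⊕ Fin l) = n - a + l := by
    rw [Fintype.card_sum, Fintype.card_fin, Fintype.card_subtype_compl, Fintype.card_coe,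
      hAcard, hP]
  obtain ⟨e⟩ : Nonempty (({u : P // u ∉ A} ⊕ Fin l) ≃ Fin (n - a + l)) :=
    ⟨Fintype.equivFinOfCardEq hcardC⟩
  refine ⟨fun y => (f y).map e.toEmbedding, fun x y => ?_⟩
  rw [hmain x y, Finset.map_subset_map]
end

section
/- If U is a poset on N elements that contains every n-element poset as an induced subposet, then C(N, n) · n! ≥ 2^{⌊n/2⌋·⌈n/2⌉}. Consequently N ≥ 2^{n/4 - o(n)}; in particular, for n large, N ≥ 2^{n/5}. -/
/-- `U` is universal for `n`-element posets: every `n`-element poset embeds into `U`. -/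
def UniversalPoset (U : Type) [PartialOrder U] (n : ℕ) : Prop :=
  ∀ (P : Type) [Fintype P] [PartialOrder P], Fintype.card P = n →
    ∃ f : P → U, ∀ x y : P, x ≤ y ↔ f x ≤ f y

/-- The bipartite partial order on `Fin k ⊕ Fin m` determined by `S`. -/
def bipOrd (k m : ℕ) (S : Finset (Fin k × Fin m)) : PartialOrder (Fin k ⊕ Fin m) where
  le x y := x = y ∨ ∃ a b, x = Sum.inl a ∧ y = Sum.inr b ∧ (a, b) ∈ S
  lt x y := (x = y ∨ ∃ a b, x = Sum.inl a ∧ y = Sum.inr b ∧ (a, b) ∈ S) ∧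
    ¬(y = x ∨ ∃ a b, y = Sum.inl a ∧ x = Sum.inr b ∧ (a, b) ∈ S)
  lt_iff_le_not_ge _ _ := Iff.rfl
  le_refl x := Or.inl rfl
  le_trans x y z hxy hyz := by
    rcases hxy with rfl | ⟨a, b, rfl, rfl, hS⟩
    · exact hyz
    · rcases hyz with rfl | ⟨a', b', h1, rfl, hS'⟩
      · exact Or.inr ⟨a, b, rfl, rfl, hS⟩
      · simp at h1
  le_antisymm x y hxy hyx := by
    rcases hxy with rfl | ⟨a, b, rfl, rfl, hS⟩
    · rfl
    · rcases hyx with h | ⟨a', b', h1, h2, hS'⟩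
      · exact h.symm
      · simp at h1

theorem key (n N : ℕ) (U : Type) [Fintype U] [PartialOrder U] (hc : Fintype.card U = N)
    (hU : UniversalPoset U n) : 2 ^ (n / 2 * ((n + 1) / 2)) ≤ N.choose n * n.factorial := by
  set k := n / 2 with hk
  set m := (n + 1) / 2 with hm
  have hkm : k + m = n := by omega
  -- for each S, get an embedding
  have hemb : ∀ S : Finset (Fin k × Fin m), ∃ f : (Fin k ⊕ Fin m) → U,
      ∀ x y, (bipOrd k m S).le x y ↔ f x ≤ f y := by
    intro S
    exact @hU (Fin k ⊕ Fin m) _ (bipOrd k m S) (by simp [hkm])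
  choose f hf using hemb
  have hinj : ∀ S, Function.Injective (f S) := by
    intro S x y hxy
    have h1 : (bipOrd k m S).le x y := (hf S x y).2 (le_of_eq hxy)
    have h2 : (bipOrd k m S).le y x := (hf S y x).2 (le_of_eq hxy.symm)
    exact (bipOrd k m S).le_antisymm x y h1 h2
  -- the map S ↦ embedding is injective
  have hFinj : Function.Injective (fun S : Finset (Fin k × Fin m) =>
      (⟨f S, hinj S⟩ : (Fin k ⊕ Fin m) ↪ U)) := by
    intro S T hST
    have hfun : f S = f T := congrArg Function.Embedding.toFun hST
    ext ⟨a, b⟩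
    have hS : (a, b) ∈ S ↔ (bipOrd k m S).le (Sum.inl a) (Sum.inr b) := by
      constructor
      · intro h; exact Or.inr ⟨a, b, rfl, rfl, h⟩
      · rintro (h | ⟨a', b', h1, h2, h3⟩)
        · simp at h
        · simp only [Sum.inl.injEq, Sum.inr.injEq] at h1 h2
          subst h1; subst h2; exact h3
    have hT : (a, b) ∈ T ↔ (bipOrd k m T).le (Sum.inl a) (Sum.inr b) := by
      constructor
      · intro h; exact Or.inr ⟨a, b, rfl, rfl, h⟩
      · rintro (h | ⟨a', b', h1, h2, h3⟩)
        · simp at h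
        · simp only [Sum.inl.injEq, Sum.inr.injEq] at h1 h2
          subst h1; subst h2; exact h3
    rw [hS, hT, hf S, hf T, hfun]
  have hcard : Fintype.card (Finset (Fin k × Fin m)) ≤ Fintype.card ((Fin k ⊕ Fin m) ↪ U) :=
    Fintype.card_le_of_injective _ hFinj
  rw [Fintype.card_finset, Fintype.card_prod, Fintype.card_fin, Fintype.card_fin,
    Fintype.card_embedding_eq, Fintype.card_sum, Fintype.card_fin, Fintype.card_fin, hc,
    hkm, Nat.descFactorial_eq_factorial_mul_choose] at hcard
  calc 2 ^ (n / 2 * ((n + 1) / 2)) = 2 ^ (k * m) := rfl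
    _ ≤ n.factorial * N.choose n := hcard
    _ = N.choose n * n.factorial := Nat.mul_comm _ _

/-- If `U` is a poset on `N` elements universal for `n`-element posets, then
`C(N, n) · n! ≥ 2 ^ (⌊n/2⌋ ⌈n/2⌉)`; consequently, for `n` large, `N ≥ 2 ^ (n/5)`. -/
theorem stmt_11 :
    (∀ (n N : ℕ) (U : Type) [Fintype U] [PartialOrder U], Fintype.card U = N →
      UniversalPoset U n → 2 ^ (n / 2 * ((n + 1) / 2)) ≤ N.choose n * n.factorial) ∧
    ∃ n₀ : ℕ, ∀ n ≥ n₀, ∀ (N : ℕ) (U : Type) [Fintype U] [PartialOrder U],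
      Fintype.card U = N → UniversalPoset U n → 2 ^ (n / 5) ≤ N := by
  constructor
  · intro n N U _ _ hc hU
    exact key n N U hc hU
  · refine ⟨10, fun n hn N U _ _ hc hU => ?_⟩
    have h1 := key n N U hc hU
    have h2 : N.choose n * n.factorial ≤ N ^ n := by
      rw [mul_comm, ← Nat.descFactorial_eq_factorial_mul_choose]
      exact Nat.descFactorial_le_pow N n
    have hexp : n / 5 * n ≤ n / 2 * ((n + 1) / 2) := by
      set c := n / 5 with hcdef
      set a := n / 2 with hadef
      set b := (n + 1) / 2 with hbdef
      have h5 : 5 * c ≤ n := by omega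
      have h2 : n ≤ 2 * a + 1 := by omega
      have hab : a ≤ b := by omega
      have h10 : 10 ≤ n := hn
      have key2 : c * n ≤ a * a := by nlinarith
      calc c * n ≤ a * a := key2
        _ ≤ a * b := Nat.mul_le_mul_left a hab
    have h3 : (2 ^ (n / 5)) ^ n ≤ N ^ n := by
      rw [← pow_mul]
      calc 2 ^ (n / 5 * n) ≤ 2 ^ (n / 2 * ((n + 1) / 2)) :=
            Nat.pow_le_pow_right (by norm_num) hexp
        _ ≤ N.choose n * n.factorial := h1
        _ ≤ N ^ n := h2
    exact (Nat.pow_le_pow_iff_left (by omega : n ≠ 0)).1 h3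
end

section
/- Let P be a finite poset, A an antichain in P, B the down-closure of A, and Z = P \ B. Define, for z ∈ Z, the set f(z) = { x ∈ B : x ≤ z } ∪ M ∪ { z' ∈ Z : z ≰ z' }, where M is a fixed set disjoint from B and Z. Then for z, z' ∈ Z: z ≤ z' if and only if f(z) ⊆ f(z'). -/
/-- The complement trick: encoding each element `z` above an antichain by the elements
of `B` below it, a fixed set `M`, and the elements of `Z` not above it, preserves and
reflects the order on `Z`. -/
theorem stmt_18 (P M : Type*) [PartialOrder P] (A : Set P)
    (hA : IsAntichain (· ≤ ·) A)
    (B : Set P) (hB : B = {x : P | ∃ y ∈ A, x ≤ y}) (Z : Set P) (hZ : Z = Bᶜ)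
    (f : P → Set (P ⊕ M))
    (hf : ∀ z ∈ Z, f z =
      (Sum.inl '' {x ∈ B | x ≤ z}) ∪ (Sum.inr '' Set.univ) ∪
        (Sum.inl '' {z' ∈ Z | ¬ z ≤ z'})) :
    ∀ z ∈ Z, ∀ z' ∈ Z, (z ≤ z' ↔ f z ⊆ f z') := by
  intro z hz z' hz'
  rw [hf z hz, hf z' hz']
  constructor
  · intro hle a ha
    rcases ha with (⟨x, ⟨⟨hxB, hxz⟩, rfl⟩⟩ | hm) | ⟨w, ⟨⟨hwZ, hnw⟩, rfl⟩⟩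
    · exact Or.inl (Or.inl ⟨x, ⟨hxB, hxz.trans hle⟩, rfl⟩)
    · exact Or.inl (Or.inr hm)
    · exact Or.inr ⟨w, ⟨hwZ, fun h => hnw (hle.trans h)⟩, rfl⟩
  · intro hsub
    by_contra hne
    have : (Sum.inl z' : P ⊕ M) ∈ (Sum.inl '' {x ∈ B | x ≤ z}) ∪ (Sum.inr '' Set.univ) ∪
        (Sum.inl '' {z'' ∈ Z | ¬ z ≤ z''}) := Or.inr ⟨z', ⟨hz', hne⟩, rfl⟩
    rcases hsub this with (⟨x, ⟨⟨hxB, _⟩, hx⟩⟩ | ⟨m, _, hm⟩) | ⟨w, ⟨⟨_, hnw⟩, hw⟩⟩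
    · cases Sum.inl.injEq .. ▸ hx
      exact (hZ ▸ hz') hxB
    · cases hm
    · cases Sum.inl.injEq .. ▸ hw
      exact hnw le_rfl
end
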